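/- Let 0 < q < 1. Then for every nonnegative integer n and every complex z, (q;q)_n S_n(z;q) converges to A_q(z) as n \to \infty, uniformly on compact subsets of the complex plane. In particular, \lim_{n\to\infty} S_n(z;q) = A_q(z)/(q;q)_\infty. -/

import Mathlib

/-!
Since `(q;q)_n / (q;q)_{n-j} = (1 - q^n) ⋯ (1 - q^{n-j+1})`, the polynomial `(q;q)_n S_n(z;q)` is
the q-Airy series with its `j`-th term multiplied by a weight of modulus at most `1` that
vanishes for `j > n` and tends to `1` as `n → ∞`. For `|z| ≤ R` the terms are dominated by
`q^{j²} (R/(1-q))^j`, which is summable, so Tannery's theorem (dominated convergence for series)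
makes the convergence uniform. Dividing by `(q;q)_n → (q;q)_∞ ≠ 0` gives the limit of `S_n`.
-/

open Finset Filter

/-- `(q;q)_k` as a complex number. -/
noncomputable def qPochC (q : ℝ) (k : ℕ) : ℂ := ∏ i ∈ range k, (1 - (q : ℂ) ^ (i + 1))

/-- `(q;q)_∞ = ∏_{i=1}^∞ (1-q^i)` as a complex number. -/
noncomputable def qPochInfC (q : ℝ) : ℂ := ∏' i : ℕ, (1 - (q : ℂ) ^ (i + 1))

/-- The Stieltjes-Wigert polynomial `S_n(z;q)`. -/
noncomputable def SW (q : ℝ) (n : ℕ) (z : ℂ) : ℂ :=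
  ∑ j ∈ range (n + 1), (q : ℂ) ^ (j ^ 2) * (-z) ^ j / (qPochC q j * qPochC q (n - j))

/-- The q-Airy function. -/
noncomputable def qAiry (q : ℝ) (z : ℂ) : ℂ :=
  ∑' k : ℕ, (q : ℂ) ^ (k ^ 2) * (-z) ^ k / qPochC q k

open Topology

theorem tendstoUniformlyOn_tsum_smul_of_tendsto_one {α ι β 𝕜 E : Type*} [NormedField 𝕜]
    [NormedAddCommGroup E] [NormedSpace 𝕜 E] [CompleteSpace E] {l : Filter α}
    {w : α → ι → 𝕜} {g : ι → β → E} {M : ι → ℝ} {K : Set β} (hM : Summable M)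
    (hg : ∀ j, ∀ z ∈ K, ‖g j z‖ ≤ M j) (hw : ∀ n j, ‖w n j‖ ≤ 1)
    (hw_lim : ∀ j, Tendsto (w · j) l (𝓝 1)) :
    TendstoUniformlyOn (fun n z => ∑' j, w n j • g j z) (fun z => ∑' j, g j z) l K := by
  have hdefect (n : α) (j : ι) : ‖1 - w n j‖ ≤ 2 :=
    (norm_sub_le _ _).trans (by rw [norm_one]; linarith [hw n j])
  have hbound (n : α) (j : ι) : ‖M j * ‖1 - w n j‖‖ ≤ 2 * ‖M j‖ := by
    rw [norm_mul, norm_norm, mul_comm]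
    exact mul_le_mul_of_nonneg_right (hdefect n j) (norm_nonneg _)
  have hsum (n : α) : Summable fun j => M j * ‖1 - w n j‖ :=
    (hM.norm.mul_left 2).of_norm_bounded (hbound n)
  have hlim : Tendsto (fun n => ∑' j, M j * ‖1 - w n j‖) l (𝓝 0) := by
    have := tendsto_tsum_of_dominated_convergence (hM.norm.mul_left 2)
      (fun j => ((tendsto_const_nhds (x := (1 : 𝕜)).sub (hw_lim j)).norm).const_mul (M j))
      (Eventually.of_forall hbound)
    simpa using this
  have hdist (n : α) (z : β) (hz : z ∈ K) :
      dist (∑' j, g j z) (∑' j, w n j • g j z) ≤ ∑' j, M j * ‖1 - w n j‖ := by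
    have hg_sum : Summable (g · z) := .of_norm_bounded hM fun j => hg j z hz
    have hwg_sum : Summable fun j => w n j • g j z :=
      .of_norm_bounded hM fun j => (norm_smul_le _ _).trans
        (by simpa using mul_le_mul (hw n j) (hg j z hz) (norm_nonneg _) zero_le_one)
    rw [dist_eq_norm, ← hg_sum.tsum_sub hwg_sum]
    refine tsum_of_norm_bounded (hsum n).hasSum fun j => ?_
    rw [← one_smul 𝕜 (g j z), smul_smul, mul_one, ← sub_smul, mul_comm]
    exact (norm_smul_le _ _).trans (mul_le_mul_of_nonneg_left (hg j z hz) (norm_nonneg _))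
  rw [Metric.tendstoUniformlyOn_iff]
  intro ε hε
  filter_upwards [hlim.eventually (gt_mem_nhds hε)] with n hn z hz
  exact (hdist n z hz).trans_lt hn

theorem summable_pow_sq_mul_pow {q : ℝ} (hq0 : 0 ≤ q) (hq1 : q < 1) (c : ℝ) :
    Summable fun j : ℕ => q ^ (j ^ 2) * c ^ j := by
  have hsmall : ∀ᶠ j : ℕ in atTop, |q ^ j * c| ≤ 1 / 2 := by
    have h := ((tendsto_pow_atTop_nhds_zero_of_lt_one hq0 hq1).mul_const c).abs
    rw [zero_mul, abs_zero] at h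
    exact h.eventually_le_const (by norm_num)
  refine (summable_geometric_of_lt_one (by norm_num) (by norm_num : (1 / 2 : ℝ) < 1))
    |>.of_norm_bounded_eventually_nat ?_
  filter_upwards [hsmall] with j hj
  rw [sq, pow_mul, ← mul_pow, norm_pow, Real.norm_eq_abs]
  exact pow_le_pow_left₀ (abs_nonneg _) hj j

/-- For `j > n` the truncated subtraction makes the factor `i = n` equal to `1 - q^0 = 0`. -/
noncomputable def qFalling (q : ℝ) (n j : ℕ) : ℂ := ∏ i ∈ range j, (1 - (q : ℂ) ^ (n - i))

noncomputable def qAiryTerm (q : ℝ) (j : ℕ) (z : ℂ) : ℂ := (q : ℂ) ^ (j ^ 2) * (-z) ^ j / qPochC q j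

theorem qPochC_eq_qFalling_mul (q : ℝ) {n j : ℕ} (h : j ≤ n) :
    qPochC q n = qFalling q n j * qPochC q (n - j) := by
  induction j with
  | zero => simp [qFalling]
  | succ j ih =>
    obtain ⟨m, hm⟩ : ∃ m, n - j = m + 1 := ⟨n - (j + 1), by omega⟩
    rw [ih (by omega), show n - (j + 1) = m by omega]
    simp only [qFalling, qPochC, hm, prod_range_succ]
    ring

theorem qFalling_eq_zero (q : ℝ) {n j : ℕ} (h : n < j) : qFalling q n j = 0 :=
  prod_eq_zero (mem_range.2 h) (by simp)

section

variable {q : ℝ}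

theorem norm_one_sub_pow_le_one (hq0 : 0 ≤ q) (hq1 : q ≤ 1) (m : ℕ) :
    ‖1 - (q : ℂ) ^ m‖ ≤ 1 := by
  rw [← Complex.ofReal_pow, ← Complex.ofReal_one, ← Complex.ofReal_sub, Complex.norm_real,
    Real.norm_eq_abs, abs_le]
  constructor <;> nlinarith [pow_nonneg hq0 m, pow_le_one₀ hq0 hq1 (n := m)]

theorem norm_qFalling_le_one (hq0 : 0 ≤ q) (hq1 : q ≤ 1) (n j : ℕ) : ‖qFalling q n j‖ ≤ 1 :=
  (Finset.norm_prod_le _ _).trans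
    (prod_le_one (fun _ _ => norm_nonneg _) fun _ _ => norm_one_sub_pow_le_one hq0 hq1 _)

theorem tendsto_qFalling (hq0 : 0 ≤ q) (hq1 : q < 1) (j : ℕ) :
    Tendsto (qFalling q · j) atTop (𝓝 1) := by
  have hpow : Tendsto (fun n : ℕ => (q : ℂ) ^ n) atTop (𝓝 0) :=
    tendsto_pow_atTop_nhds_zero_of_norm_lt_one (by simpa [abs_of_nonneg hq0])
  simpa [qFalling] using tendsto_finsetProd (range j) fun i _ =>
    (hpow.comp (tendsto_sub_atTop_nat i)).const_sub (1 : ℂ)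

theorem one_sub_pow_le_norm_qPochC (hq0 : 0 ≤ q) (hq1 : q < 1) (k : ℕ) :
    (1 - q) ^ k ≤ ‖qPochC q k‖ := by
  rw [qPochC, norm_prod]
  calc (1 - q) ^ k = ∏ _i ∈ range k, (1 - q) := by simp
    _ ≤ ∏ i ∈ range k, ‖1 - (q : ℂ) ^ (i + 1)‖ := by
      refine prod_le_prod (fun _ _ => by linarith) fun i _ => ?_
      rw [← Complex.ofReal_pow, ← Complex.ofReal_one, ← Complex.ofReal_sub, Complex.norm_real,
        Real.norm_eq_abs]
      have : q ^ (i + 1) ≤ q := pow_le_of_le_one hq0 hq1.le (Nat.succ_ne_zero i)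
      exact (by linarith : 1 - q ≤ 1 - q ^ (i + 1)).trans (le_abs_self _)

theorem qPochC_ne_zero (hq0 : 0 ≤ q) (hq1 : q < 1) (k : ℕ) : qPochC q k ≠ 0 :=
  norm_pos_iff.1 <| (pow_pos (by linarith) k).trans_le (one_sub_pow_le_norm_qPochC hq0 hq1 k)

theorem norm_qAiryTerm_le (hq0 : 0 ≤ q) (hq1 : q < 1) (j : ℕ) {z : ℂ} {R : ℝ} (hz : ‖z‖ ≤ R) :
    ‖qAiryTerm q j z‖ ≤ q ^ (j ^ 2) * (R / (1 - q)) ^ j := by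
  have hR : 0 ≤ R := (norm_nonneg z).trans hz
  rw [qAiryTerm, norm_div, norm_mul, norm_pow, norm_pow, norm_neg, Complex.norm_real,
    Real.norm_eq_abs, abs_of_nonneg hq0, div_pow, mul_div_assoc]
  gcongr
  exact one_sub_pow_le_norm_qPochC hq0 hq1 j

theorem qPochC_mul_SW (hq0 : 0 ≤ q) (hq1 : q < 1) (n : ℕ) (z : ℂ) :
    qPochC q n * SW q n z = ∑' j, qFalling q n j • qAiryTerm q j z := by
  rw [tsum_eq_sum (s := range (n + 1)) fun j hj => by
    rw [qFalling_eq_zero q (by simpa using hj), zero_smul], SW, mul_sum]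
  refine sum_congr rfl fun j hj => ?_
  rw [qPochC_eq_qFalling_mul q (Nat.lt_succ_iff.1 (mem_range.1 hj)), qAiryTerm, smul_eq_mul]
  have := qPochC_ne_zero hq0 hq1 (n - j)
  field_simp

theorem tendsto_qPochC (hq0 : 0 ≤ q) (hq1 : q < 1) :
    Tendsto (qPochC q) atTop (𝓝 (qPochInfC q)) :=
  (ModularForm.multipliable_one_sub_pow (by simpa [abs_of_nonneg hq0])).hasProd.tendsto_prod_nat

theorem qPochInfC_ne_zero (hq0 : 0 ≤ q) (hq1 : q < 1) : qPochInfC q ≠ 0 := by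
  have hpow (i : ℕ) : ‖(q : ℂ) ^ (i + 1)‖ = q ^ (i + 1) := by simp [abs_of_nonneg hq0]
  rw [qPochInfC]
  simp_rw [sub_eq_add_neg]
  refine tprod_one_add_ne_zero_of_summable (fun i => ?_) ?_
  · rw [← sub_eq_add_neg, sub_ne_zero]
    exact ne_of_apply_ne norm <| by
      rw [norm_one, hpow]; exact (pow_lt_one₀ hq0 hq1 i.succ_ne_zero).ne'
  · simpa only [norm_neg, hpow] using
      (summable_nat_add_iff 1).2 (summable_geometric_of_lt_one hq0 hq1)

end

theorem wigert_limit (q : ℝ) (hq0 : 0 < q) (hq1 : q < 1) :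
    (∀ K : Set ℂ, IsCompact K →
      TendstoUniformlyOn (fun n z => qPochC q n * SW q n z) (qAiry q) atTop K) ∧
    ∀ z : ℂ, Tendsto (fun n => SW q n z) atTop (nhds (qAiry q z / qPochInfC q)) := by
  have hunif (K : Set ℂ) (hK : IsCompact K) :
      TendstoUniformlyOn (fun n z => qPochC q n * SW q n z) (qAiry q) atTop K := by
    obtain ⟨R, hR⟩ := hK.isBounded.subset_closedBall 0
    simp_rw [qPochC_mul_SW hq0.le hq1]
    exact tendstoUniformlyOn_tsum_smul_of_tendsto_one
      (summable_pow_sq_mul_pow hq0.le hq1 (R / (1 - q)))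
      (fun j z hz => norm_qAiryTerm_le hq0.le hq1 j (by simpa using hR hz))
      (norm_qFalling_le_one hq0.le hq1.le) (tendsto_qFalling hq0.le hq1)
  refine ⟨hunif, fun z => ?_⟩
  have hlim := ((hunif {z} isCompact_singleton).tendsto_at rfl).div
    (tendsto_qPochC hq0.le hq1) (qPochInfC_ne_zero hq0.le hq1)
  exact hlim.congr fun n => mul_div_cancel_left₀ _ (qPochC_ne_zero hq0.le hq1 n)
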